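/- Let a, b, c ∈ ℝ with a² + b² + c² = 1, let q := a·i + b·j + c·k ∈ ℍ act by left multiplication, and let Q := a·I + b·J + c·K on W. If an ℝ-linear map L : ℍ → W is triholomorphic (L(x) = I(L(i·x)) + J(L(j·x)) + K(L(k·x)) for all x ∈ ℍ) and there exists v ≠ 0 in ℍ with L(v) = 0 and L(q·v) = 0, then L(q·x) = −Q(L(x)) for all x ∈ ℍ. (The 'short computation' in the proof of the bubble-holomorphicity proposition: a triholomorphic map annihilating a q-invariant 2-plane is (q, −Q)-holomorphic.) -/

import Mathlib

/-!
Let `ρ : ℍ → End W` be the action `x ↦ x.re + x.imI I + x.imJ J + x.imK K`, so that `Q = ρ q`. For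
imaginary `q`, the defect `D x := L (q x) + ρ q (L x)` of `(q, −Q)`-holomorphicity satisfies
`D x = ρ x (D 1)`, which follows from triholomorphicity at `1` by a computation on the basis of
`ℍ`. Hence `0 = D v = ρ v (D 1)`, and `ρ v` is invertible because `v` is, so `D 1 = 0`
and then `D = 0`.
-/

open scoped Quaternion RealInnerProductSpace

noncomputable def Quat.i : ℍ[ℝ] := ⟨0, 1, 0, 0⟩
noncomputable def Quat.j : ℍ[ℝ] := ⟨0, 0, 1, 0⟩
noncomputable def Quat.k : ℍ[ℝ] := ⟨0, 0, 0, 1⟩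

namespace Quat

theorem eq_re_add_imI_add_imJ_add_imK (x : ℍ[ℝ]) :
    x = x.re • 1 + x.imI • i + x.imJ • j + x.imK • k := by
  ext <;> simp <;> simp [i, j, k]

theorem re_i : i.re = 0 := rfl
theorem re_j : j.re = 0 := rfl
theorem re_k : k.re = 0 := rfl

theorem i_mul_i : i * i = -1 := by ext <;> simp <;> simp [i]
theorem j_mul_j : j * j = -1 := by ext <;> simp <;> simp [j]
theorem k_mul_k : k * k = -1 := by ext <;> simp <;> simp [k]
theorem i_mul_j : i * j = k := by ext <;> simp <;> simp [i, j, k]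
theorem j_mul_k : j * k = i := by ext <;> simp <;> simp [i, j, k]
theorem k_mul_i : k * i = j := by ext <;> simp <;> simp [i, j, k]
theorem j_mul_i : j * i = -k := by ext <;> simp <;> simp [i, j, k]
theorem k_mul_j : k * j = -i := by ext <;> simp <;> simp [i, j, k]
theorem i_mul_k : i * k = -j := by ext <;> simp <;> simp [i, j, k]

end Quat

section Quaternionic

variable {W : Type*} [AddCommGroup W] [Module ℝ W]

theorem LinearMap.apply_quaternion (L : ℍ[ℝ] →ₗ[ℝ] W) (x : ℍ[ℝ]) :
    L x = x.re • L 1 + x.imI • L Quat.i + x.imJ • L Quat.j + x.imK • L Quat.k := by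
  conv_lhs => rw [Quat.eq_re_add_imI_add_imJ_add_imK x]
  simp only [map_add, map_smul]

theorem AlgHom.quaternion_apply_apply (ρ : ℍ[ℝ] →ₐ[ℝ] Module.End ℝ W) (x : ℍ[ℝ]) (w : W) :
    ρ x w = x.re • w + x.imI • ρ Quat.i w + x.imJ • ρ Quat.j w + x.imK • ρ Quat.k w := by
  simpa using (LinearMap.applyₗ w ∘ₗ ρ.toLinearMap).apply_quaternion x

theorem apply_mul_add_apply_eq_of_re_eq_zero (ρ : ℍ[ℝ] →ₐ[ℝ] Module.End ℝ W)
    (L : ℍ[ℝ] →ₗ[ℝ] W)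
    (h1 : L 1 = ρ Quat.i (L Quat.i) + ρ Quat.j (L Quat.j) + ρ Quat.k (L Quat.k))
    {q : ℍ[ℝ]} (hq : q.re = 0) (x : ℍ[ℝ]) :
    L (q * x) + ρ q (L x) = ρ x (L q + ρ q (L 1)) := by
  simp only [ρ.quaternion_apply_apply x, ρ.quaternion_apply_apply q, L.apply_quaternion (q * x),
    L.apply_quaternion x, L.apply_quaternion q, h1, hq, Quaternion.re_mul, Quaternion.imI_mul,
    Quaternion.imJ_mul, Quaternion.imK_mul, map_add, map_smul, ← Module.End.mul_apply, ← map_mul,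
    Quat.i_mul_i, Quat.j_mul_j, Quat.k_mul_k, Quat.i_mul_j, Quat.j_mul_k, Quat.k_mul_i,
    Quat.j_mul_i, Quat.k_mul_j, Quat.i_mul_k, map_neg, map_one, Module.End.one_apply,
    LinearMap.neg_apply]
  module

end Quaternionic

section Hypercomplex

variable {W : Type*} [AddCommGroup W] [Module ℝ W] {I J K : W →ₗ[ℝ] W}

noncomputable def quaternionAction (hII : I ∘ₗ I = -LinearMap.id) (hJJ : J ∘ₗ J = -LinearMap.id)
    (hIJ : I ∘ₗ J = K) (hKI : K ∘ₗ I = J) : ℍ[ℝ] →ₐ[ℝ] Module.End ℝ W :=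
  QuaternionAlgebra.lift
    { i := I, j := J, k := K
      i_mul_i := by simp [Module.End.mul_eq_comp, Module.End.one_eq_id, hII]
      j_mul_j := by simp [Module.End.mul_eq_comp, Module.End.one_eq_id, hJJ]
      i_mul_j := hIJ
      j_mul_i := by
        rw [zero_smul, zero_sub, ← hKI, Module.End.mul_eq_comp, LinearMap.comp_assoc, hII]
        simp }

variable (hII : I ∘ₗ I = -LinearMap.id) (hJJ : J ∘ₗ J = -LinearMap.id)
    (hIJ : I ∘ₗ J = K) (hKI : K ∘ₗ I = J)

theorem quaternionAction_i : quaternionAction hII hJJ hIJ hKI Quat.i = I := by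
  show QuaternionAlgebra.Basis.lift _ _ = _
  simp [QuaternionAlgebra.Basis.lift, Quat.i]

theorem quaternionAction_j : quaternionAction hII hJJ hIJ hKI Quat.j = J := by
  show QuaternionAlgebra.Basis.lift _ _ = _
  simp [QuaternionAlgebra.Basis.lift, Quat.j]

theorem quaternionAction_k : quaternionAction hII hJJ hIJ hKI Quat.k = K := by
  show QuaternionAlgebra.Basis.lift _ _ = _
  simp [QuaternionAlgebra.Basis.lift, Quat.k]

end Hypercomplex

theorem stmt4_general {W : Type*} [NormedAddCommGroup W] [InnerProductSpace ℝ W]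
    (I J K : W →ₗ[ℝ] W)
    (hII : I ∘ₗ I = -LinearMap.id) (hJJ : J ∘ₗ J = -LinearMap.id)
    (hIJ : I ∘ₗ J = K) (hKI : K ∘ₗ I = J)
    (a b c : ℝ)
    (L : ℍ[ℝ] →ₗ[ℝ] W)
    (htri : ∀ x : ℍ[ℝ],
      L x = I (L (Quat.i * x)) + J (L (Quat.j * x)) + K (L (Quat.k * x)))
    (v : ℍ[ℝ]) (hv : v ≠ 0) (hLv : L v = 0)
    (hLqv : L ((a • Quat.i + b • Quat.j + c • Quat.k) * v) = 0) :
    ∀ x : ℍ[ℝ],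
      L ((a • Quat.i + b • Quat.j + c • Quat.k) * x)
        = -((a • I + b • J + c • K) (L x)) := by
  have hρi := quaternionAction_i hII hJJ hIJ hKI
  have hρj := quaternionAction_j hII hJJ hIJ hKI
  have hρk := quaternionAction_k hII hJJ hIJ hKI
  set ρ := quaternionAction hII hJJ hIJ hKI
  set q := a • Quat.i + b • Quat.j + c • Quat.k
  have hQ : a • I + b • J + c • K = ρ q := by simp only [q, map_add, map_smul, hρi, hρj, hρk]
  have hq : q.re = 0 := by simp [q, Quat.re_i, Quat.re_j, Quat.re_k]
  have h1 : L 1 = ρ Quat.i (L Quat.i) + ρ Quat.j (L Quat.j) + ρ Quat.k (L Quat.k) := by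
    simpa [hρi, hρj, hρk] using htri 1
  have hdefect := apply_mul_add_apply_eq_of_re_eq_zero ρ L h1 hq
  have hdefect_one : L q + ρ q (L 1) = 0 := by
    refine ((Module.End.isUnit_iff _).mp ((Ne.isUnit hv).map ρ)).injective ?_
    rw [← hdefect, hLv, hLqv, map_zero, map_zero, add_zero]
  intro x
  rw [hQ, eq_neg_iff_add_eq_zero, hdefect, hdefect_one, map_zero]

/-- a triholomorphic linear map `L : ℍ → W` annihilating a `q`-invariant
`2`-plane (i.e. `L v = 0` and `L (q·v) = 0` for some `v ≠ 0`) is `(q, −Q)`-holomorphic,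
where `q = a i + b j + c k` and `Q = a I + b J + c K` with `a² + b² + c² = 1`. -/
theorem stmt4 {W : Type*} [NormedAddCommGroup W] [InnerProductSpace ℝ W]
    (I J K : W →ₗ[ℝ] W)
    (hIinner : ∀ v w : W, ⟪I v, I w⟫ = ⟪v, w⟫)
    (hJinner : ∀ v w : W, ⟪J v, J w⟫ = ⟪v, w⟫)
    (hKinner : ∀ v w : W, ⟪K v, K w⟫ = ⟪v, w⟫)
    (hII : I ∘ₗ I = -LinearMap.id) (hJJ : J ∘ₗ J = -LinearMap.id)
    (hKK : K ∘ₗ K = -LinearMap.id)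
    (hIJ : I ∘ₗ J = K) (hJK : J ∘ₗ K = I) (hKI : K ∘ₗ I = J)
    (a b c : ℝ) (habc : a ^ 2 + b ^ 2 + c ^ 2 = 1)
    (L : ℍ[ℝ] →ₗ[ℝ] W)
    (htri : ∀ x : ℍ[ℝ],
      L x = I (L (Quat.i * x)) + J (L (Quat.j * x)) + K (L (Quat.k * x)))
    (v : ℍ[ℝ]) (hv : v ≠ 0) (hLv : L v = 0)
    (hLqv : L ((a • Quat.i + b • Quat.j + c • Quat.k) * v) = 0) :
    ∀ x : ℍ[ℝ],
      L ((a • Quat.i + b • Quat.j + c • Quat.k) * x)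
        = -((a • I + b • J + c • K) (L x)) :=
  stmt4_general I J K hII hJJ hIJ hKI a b c L htri v hv hLv hLqv
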